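/- For the diffusion Israel-Stewart system at the reference state q* = 0 with v fixed, the sound modes λ₁± = (u ± u⁰c₁)/(u⁰ ± uc₁) with c₁ = 1/√3 satisfy r₁±* · ∇_ψ λ₁± = (1 - c₁²)/[u⁰(u⁰ ± uc₁)²] = (2/3)/[u⁰(u⁰ ± u/√3)²] > 0, hence these modes are always genuinely nonlinear. -/

import Mathlib

/-!
With `u⁰ = √(1 + u²)`, the mode `(u + u⁰c)/(u⁰ + uc)` is the relativistic sum of the fluid
velocity `u/u⁰` and the sound speed `c`. The quotient rule, `du⁰/du = u/u⁰` and `(u⁰)² - u² = 1`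
give the derivative `(1 - c²)/(u⁰(u⁰ + uc)²)`, which is positive since `|c| < 1` and `|u| < u⁰`;
the two sound modes are the cases `c = ±1/√3`.
-/

open Real

lemma abs_lt_sqrt_one_add_sq (u : ℝ) : |u| < √(1 + u ^ 2) :=
  lt_sqrt_of_sq_lt (by rw [sq_abs]; linarith)

lemma sqrt_one_add_sq_add_mul_pos {c : ℝ} (hc : |c| ≤ 1) (u : ℝ) : 0 < √(1 + u ^ 2) + u * c := by
  have h : |u * c| ≤ |u| := by
    rw [abs_mul]; exact mul_le_of_le_one_right (abs_nonneg u) hc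
  linarith [neg_abs_le (u * c), abs_lt_sqrt_one_add_sq u]

lemma hasDerivAt_sqrt_one_add_sq (u : ℝ) :
    HasDerivAt (fun w : ℝ => √(1 + w ^ 2)) (u / √(1 + u ^ 2)) u := by
  have h : HasDerivAt (fun w : ℝ => 1 + w ^ 2) (2 * u) u := by
    simpa using (hasDerivAt_pow 2 u).const_add 1
  refine ((hasDerivAt_sqrt (by positivity)).comp u h).congr_deriv ?_
  field_simp

lemma hasDerivAt_div_sqrt_one_add_sq (c u : ℝ) (hD : √(1 + u ^ 2) + u * c ≠ 0) :
    HasDerivAt (fun w : ℝ => (w + √(1 + w ^ 2) * c) / (√(1 + w ^ 2) + w * c))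
      ((1 - c ^ 2) / (√(1 + u ^ 2) * (√(1 + u ^ 2) + u * c) ^ 2)) u := by
  have hN := (hasDerivAt_id u).add ((hasDerivAt_sqrt_one_add_sq u).mul_const c)
  have hM := (hasDerivAt_sqrt_one_add_sq u).add ((hasDerivAt_id u).mul_const c)
  refine (hN.div hM hD).congr_deriv ?_
  have hs : 0 < √(1 + u ^ 2) := by positivity
  have hs2 : √(1 + u ^ 2) ^ 2 = 1 + u ^ 2 := sq_sqrt (by positivity)
  simp only [Pi.add_apply, id]
  field_simp
  linear_combination (1 - c ^ 2) * hs2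

lemma div_sqrt_one_add_sq_deriv_pos {c : ℝ} (hc : |c| < 1) (u : ℝ) :
    0 < (1 - c ^ 2) / (√(1 + u ^ 2) * (√(1 + u ^ 2) + u * c) ^ 2) := by
  have hc2 : c ^ 2 < 1 := (sq_lt_one_iff_abs_lt_one c).mpr hc
  have hD := sqrt_one_add_sq_add_mul_pos hc.le u
  exact div_pos (by linarith) (by positivity)

lemma one_sub_inv_sqrt_three_sq : 1 - (1 / √3) ^ 2 = 2 / 3 := by
  rw [div_pow, sq_sqrt (by norm_num)]; norm_num

lemma abs_inv_sqrt_three_lt_one : |1 / √3| < 1 := by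
  rw [abs_of_nonneg (by positivity), div_lt_one (by positivity)]
  exact lt_sqrt_of_sq_lt (by norm_num)

/-- Sound modes of the diffusion Israel–Stewart system at the reference state
`q* = 0`: with `c₁ = 1/√3` and `u⁰ = √(1+u²)`, the modes
`λ₁± = (u ± u⁰c₁)/(u⁰ ± uc₁)` satisfy
`r₁±* · ∇_ψ λ₁± = ∂λ₁±/∂u = (1 - c₁²)/[u⁰(u⁰ ± uc₁)²] = (2/3)/[u⁰(u⁰ ± u/√3)²] > 0`,
hence these modes are always genuinely nonlinear. -/
theorem diffusion_sound_modes_genuinely_nonlinear (u : ℝ) :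
    (HasDerivAt
        (fun w : ℝ =>
          (w + Real.sqrt (1 + w ^ 2) * (1 / Real.sqrt 3)) /
            (Real.sqrt (1 + w ^ 2) + w * (1 / Real.sqrt 3)))
        ((1 - (1 / Real.sqrt 3) ^ 2) /
          (Real.sqrt (1 + u ^ 2) *
            (Real.sqrt (1 + u ^ 2) + u * (1 / Real.sqrt 3)) ^ 2)) u) ∧
    (HasDerivAt
        (fun w : ℝ =>
          (w - Real.sqrt (1 + w ^ 2) * (1 / Real.sqrt 3)) /
            (Real.sqrt (1 + w ^ 2) - w * (1 / Real.sqrt 3)))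
        ((1 - (1 / Real.sqrt 3) ^ 2) /
          (Real.sqrt (1 + u ^ 2) *
            (Real.sqrt (1 + u ^ 2) - u * (1 / Real.sqrt 3)) ^ 2)) u) ∧
    ((1 - (1 / Real.sqrt 3) ^ 2) /
        (Real.sqrt (1 + u ^ 2) *
          (Real.sqrt (1 + u ^ 2) + u * (1 / Real.sqrt 3)) ^ 2) =
      (2 / 3) /
        (Real.sqrt (1 + u ^ 2) *
          (Real.sqrt (1 + u ^ 2) + u * (1 / Real.sqrt 3)) ^ 2)) ∧
    ((1 - (1 / Real.sqrt 3) ^ 2) /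
        (Real.sqrt (1 + u ^ 2) *
          (Real.sqrt (1 + u ^ 2) - u * (1 / Real.sqrt 3)) ^ 2) =
      (2 / 3) /
        (Real.sqrt (1 + u ^ 2) *
          (Real.sqrt (1 + u ^ 2) - u * (1 / Real.sqrt 3)) ^ 2)) ∧
    0 < (1 - (1 / Real.sqrt 3) ^ 2) /
        (Real.sqrt (1 + u ^ 2) *
          (Real.sqrt (1 + u ^ 2) + u * (1 / Real.sqrt 3)) ^ 2) ∧
    0 < (1 - (1 / Real.sqrt 3) ^ 2) /
        (Real.sqrt (1 + u ^ 2) *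
          (Real.sqrt (1 + u ^ 2) - u * (1 / Real.sqrt 3)) ^ 2) := by
  have hc := abs_inv_sqrt_three_lt_one
  have hc' : |-(1 / √3)| < 1 := by rwa [abs_neg]
  have hminus := hasDerivAt_div_sqrt_one_add_sq (-(1 / √3)) u
    (sqrt_one_add_sq_add_mul_pos hc'.le u).ne'
  have hminus_pos := div_sqrt_one_add_sq_deriv_pos hc' u
  simp only [mul_neg, ← sub_eq_add_neg, neg_sq] at hminus hminus_pos
  exact ⟨hasDerivAt_div_sqrt_one_add_sq _ u (sqrt_one_add_sq_add_mul_pos hc.le u).ne', hminus,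
    by rw [one_sub_inv_sqrt_three_sq], by rw [one_sub_inv_sqrt_three_sq],
    div_sqrt_one_add_sq_deriv_pos hc u, hminus_pos⟩
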